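/- Let $n_0$ and $n$ be positive integers, let $a$ be a real number with $2a > 1$, and define $\hat{\eta}_t = \frac{1}{n_0 + t}$. Then $\sum_{i = 1}^{n} \hat{\eta}_i^2 \exp\left(-2a \sum_{j = i+1}^{n} \hat{\eta}_j\right) \leq \left(\frac{n_0 + 2}{n_0 + 1}\right)^{2a} \cdot \frac{1}{2a - 1} \cdot \frac{1}{n + n_0}$, where the empty sum $\sum_{j=n+1}^{n} \hat{\eta}_j$ is $0$. -/

import Mathlib

/-!
From `1 / x ≥ log (x + 1) - log x`, the tail `∑_{j=i+1}^n η̂_j` is at least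
`log ((n₀ + n + 1) / (n₀ + i + 1))`, so the `i`-th term is at most
`((n₀ + i + 1) / (n₀ + i))^{2a} (n₀ + i)^{2a-2} / (n₀ + n + 1)^{2a}`, and the ratio in the first
factor is largest at `i = 1`. Bernoulli's inequality (convexity of `t ↦ t^b` for `b ≥ 1`,
concavity for `b ≤ 1`) bounds `b x^{b-1}` by a difference of `b`-th powers at consecutive points,
so for `b = 2a - 1 > 0` the sum `∑_i (n₀ + i)^{b-1}` telescopes to at most `(n₀ + n + 1)^b / b`.
-/

open Finset Real

theorem Finset.sum_Icc_sub_of_le_add_one {M : Type*} [AddCommGroup M] (g : ℕ → M) {m n : ℕ}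
    (hmn : m ≤ n + 1) : ∑ i ∈ Icc m n, (g (i + 1) - g i) = g (n + 1) - g m := by
  rw [← Ico_add_one_right_eq_Icc, sum_Ico_sub g hmn]

theorem Real.log_add_one_sub_log_le_inv {x : ℝ} (hx : 0 < x) : log (x + 1) - log x ≤ x⁻¹ := by
  have h := log_le_sub_one_of_pos (div_pos (by linarith) hx : 0 < (x + 1) / x)
  rwa [log_div (by linarith) hx.ne', add_div, div_self hx.ne', add_sub_cancel_left,
    one_div] at h

theorem log_sub_log_le_sum_Icc_inv {c : ℝ} (hc : 0 ≤ c) {i n : ℕ} (hin : i ≤ n) :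
    log (c + n + 1) - log (c + i + 1) ≤ ∑ j ∈ Icc (i + 1) n, 1 / (c + j) := by
  calc log (c + n + 1) - log (c + i + 1)
      = ∑ j ∈ Icc (i + 1) n, (log (c + (j + 1 : ℕ)) - log (c + j)) := by
        rw [sum_Icc_sub_of_le_add_one (fun j : ℕ ↦ log (c + j)) (by omega)]
        push_cast
        ring_nf
    _ ≤ ∑ j ∈ Icc (i + 1) n, 1 / (c + j) := by
        refine sum_le_sum fun j hj ↦ ?_
        have hj : (1 : ℝ) ≤ j := by exact_mod_cast (Nat.le_add_left 1 i).trans (mem_Icc.1 hj).1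
        rw [one_div, Nat.cast_add_one, ← add_assoc]
        exact log_add_one_sub_log_le_inv (by linarith)

theorem exp_neg_mul_sum_Icc_inv_le {c s : ℝ} (hc : 0 ≤ c) (hs : 0 ≤ s) {i n : ℕ} (hin : i ≤ n) :
    exp (-s * ∑ j ∈ Icc (i + 1) n, 1 / (c + j)) ≤ ((c + i + 1) / (c + n + 1)) ^ s := by
  rw [rpow_def_of_pos (by positivity), exp_le_exp, log_div (by positivity) (by positivity)]
  linarith [mul_le_mul_of_nonneg_left (log_sub_log_le_sum_Icc_inv hc hin) hs]

theorem mul_rpow_sub_one_le_add_one_rpow_sub_rpow {b x : ℝ} (hb : 1 ≤ b) (hx : 0 < x) :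
    b * x ^ (b - 1) ≤ (x + 1) ^ b - x ^ b := by
  have h := one_add_mul_self_le_rpow_one_add (s := x⁻¹) (by linarith [inv_pos.2 hx]) hb
  have hmul := mul_le_mul_of_nonneg_right h (rpow_nonneg hx.le b)
  have hx' : (1 + x⁻¹) * x = x + 1 := by field_simp
  rw [← mul_rpow (by positivity) hx.le, hx', add_mul, one_mul, mul_assoc, ← div_eq_inv_mul,
    ← rpow_sub_one hx.ne'] at hmul
  linarith

theorem mul_add_one_rpow_sub_one_le_add_one_rpow_sub_rpow {b x : ℝ} (hb0 : 0 ≤ b) (hb1 : b ≤ 1)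
    (hx : 0 ≤ x) : b * (x + 1) ^ (b - 1) ≤ (x + 1) ^ b - x ^ b := by
  have hx1 : 0 < x + 1 := by linarith
  have hinv : (x + 1)⁻¹ ≤ 1 := inv_le_one_of_one_le₀ (by linarith)
  have h := rpow_one_add_le_one_add_mul_self (s := -(x + 1)⁻¹) (by linarith) hb0 hb1
  have hmul := mul_le_mul_of_nonneg_right h (rpow_nonneg hx1.le b)
  have hx' : (1 + -(x + 1)⁻¹) * (x + 1) = x := by field_simp; ring
  rw [← mul_rpow (by linarith) hx1.le, hx', add_mul, one_mul, mul_assoc, neg_mul,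
    ← div_eq_inv_mul, ← rpow_sub_one hx1.ne'] at hmul
  linarith

theorem mul_sum_Icc_rpow_sub_one_le {b c : ℝ} (hb : 0 < b) (hc : 0 ≤ c) (n : ℕ) :
    b * ∑ i ∈ Icc 1 n, (c + i) ^ (b - 1) ≤ (c + n + 1) ^ b := by
  rw [mul_sum]
  rcases le_total 1 b with hb1 | hb1
  · calc ∑ i ∈ Icc 1 n, b * (c + i) ^ (b - 1)
        ≤ ∑ i ∈ Icc 1 n, ((c + (i + 1 : ℕ)) ^ b - (c + i) ^ b) := by
          refine sum_le_sum fun i hi ↦ ?_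
          have hi : (1 : ℝ) ≤ i := by exact_mod_cast (mem_Icc.1 hi).1
          rw [Nat.cast_add_one, ← add_assoc]
          exact mul_rpow_sub_one_le_add_one_rpow_sub_rpow hb1 (by linarith)
      _ = (c + n + 1) ^ b - (c + 1) ^ b := by
          rw [sum_Icc_sub_of_le_add_one (fun j : ℕ ↦ (c + j) ^ b) (by omega)]
          push_cast
          ring_nf
      _ ≤ (c + n + 1) ^ b := sub_le_self _ (rpow_nonneg (by linarith) b)
  · calc ∑ i ∈ Icc 1 n, b * (c + i) ^ (b - 1)
        ≤ ∑ i ∈ Icc 1 n, ((c + (i + 1 : ℕ) - 1) ^ b - (c + i - 1) ^ b) := by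
          refine sum_le_sum fun i hi ↦ ?_
          have hi : (1 : ℝ) ≤ i := by exact_mod_cast (mem_Icc.1 hi).1
          have h := mul_add_one_rpow_sub_one_le_add_one_rpow_sub_rpow hb.le hb1
            (by linarith : 0 ≤ c + i - 1)
          simpa [← add_assoc] using h
      _ = (c + n) ^ b - c ^ b := by
          rw [sum_Icc_sub_of_le_add_one (fun j : ℕ ↦ (c + j - 1) ^ b) (by omega)]
          simp [← add_assoc]
      _ ≤ (c + n + 1) ^ b := by
          have := rpow_le_rpow (by positivity) (by linarith : c + n ≤ c + n + 1) hb.le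
          linarith [rpow_nonneg hc b]

theorem sq_inv_mul_exp_neg_mul_sum_Icc_inv_le {c s : ℝ} (hc : 0 ≤ c) (hs : 0 ≤ s) {i n : ℕ}
    (hi : 1 ≤ i) (hin : i ≤ n) :
    (1 / (c + i)) ^ 2 * exp (-s * ∑ j ∈ Icc (i + 1) n, 1 / (c + j)) ≤
      ((c + 2) / (c + 1)) ^ s / (c + n + 1) ^ s * (c + i) ^ (s - 2) := by
  have hi : (1 : ℝ) ≤ i := by exact_mod_cast hi
  have hx : 0 < c + i := by linarith
  have hratio : (c + i + 1) / (c + i) ≤ (c + 2) / (c + 1) := by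
    rw [div_le_div_iff₀ hx (by linarith)]
    nlinarith
  calc (1 / (c + i)) ^ 2 * exp (-s * ∑ j ∈ Icc (i + 1) n, 1 / (c + j))
      ≤ (1 / (c + i)) ^ 2 * ((c + i + 1) / (c + n + 1)) ^ s := by
        gcongr
        exact exp_neg_mul_sum_Icc_inv_le hc hs hin
    _ = ((c + i + 1) / (c + i)) ^ s / (c + n + 1) ^ s * (c + i) ^ (s - 2) := by
        rw [div_rpow (by positivity) (by positivity), div_rpow (by positivity) hx.le,
          rpow_sub hx, rpow_two]
        field_simp
    _ ≤ ((c + 2) / (c + 1)) ^ s / (c + n + 1) ^ s * (c + i) ^ (s - 2) := by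
        gcongr

theorem stmt_10_general (n0 n : ℕ) (hn : 0 < n) (a : ℝ) (ha : 1 < 2 * a) :
    ∑ i ∈ Finset.Icc 1 n,
        (1 / ((n0 : ℝ) + i)) ^ 2 *
          Real.exp (-(2 * a) * ∑ j ∈ Finset.Icc (i + 1) n, 1 / ((n0 : ℝ) + j)) ≤
      (((n0 : ℝ) + 2) / ((n0 : ℝ) + 1)) ^ (2 * a) * (1 / (2 * a - 1)) *
        (1 / ((n : ℝ) + n0)) := by
  have hb : 0 < 2 * a - 1 := by linarith
  have hN : 0 < (n0 : ℝ) + n + 1 := by positivity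
  set C := (((n0 : ℝ) + 2) / ((n0 : ℝ) + 1)) ^ (2 * a)
  calc _ ≤ ∑ i ∈ Icc 1 n, C / ((n0 : ℝ) + n + 1) ^ (2 * a) * ((n0 : ℝ) + i) ^ (2 * a - 2) :=
        sum_le_sum fun i hi ↦ sq_inv_mul_exp_neg_mul_sum_Icc_inv_le (Nat.cast_nonneg n0)
          (by linarith) (mem_Icc.1 hi).1 (mem_Icc.1 hi).2
    _ = C / ((n0 : ℝ) + n + 1) ^ (2 * a) / (2 * a - 1) *
          ((2 * a - 1) * ∑ i ∈ Icc 1 n, ((n0 : ℝ) + i) ^ (2 * a - 1 - 1)) := by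
        rw [← mul_sum, sub_sub, one_add_one_eq_two]
        field_simp
    _ ≤ C / ((n0 : ℝ) + n + 1) ^ (2 * a) / (2 * a - 1) * ((n0 : ℝ) + n + 1) ^ (2 * a - 1) := by
        gcongr
        exact mul_sum_Icc_rpow_sub_one_le hb (Nat.cast_nonneg n0) n
    _ = C * (1 / (2 * a - 1)) * (1 / ((n0 : ℝ) + n + 1)) := by
        rw [rpow_sub_one hN.ne']
        field_simp
    _ ≤ C * (1 / (2 * a - 1)) * (1 / ((n : ℝ) + n0)) := by
        have : (0 : ℝ) < n := by exact_mod_cast hn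
        gcongr _ * (1 / ?_)
        linarith

/-- with `η̂_t = 1/(n₀ + t)` and `2a > 1`,
`∑_{i=1}^n η̂_i² exp(-2a ∑_{j=i+1}^n η̂_j) ≤ ((n₀+2)/(n₀+1))^{2a} · 1/(2a-1) · 1/(n+n₀)`
(the empty tail sum for `i = n` being `0`). -/
theorem stmt_10 (n0 n : ℕ) (hn0 : 0 < n0) (hn : 0 < n) (a : ℝ) (ha : 1 < 2 * a) :
    ∑ i ∈ Finset.Icc 1 n,
        (1 / ((n0 : ℝ) + i)) ^ 2 *
          Real.exp (-(2 * a) * ∑ j ∈ Finset.Icc (i + 1) n, 1 / ((n0 : ℝ) + j)) ≤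
      (((n0 : ℝ) + 2) / ((n0 : ℝ) + 1)) ^ (2 * a) * (1 / (2 * a - 1)) *
        (1 / ((n : ℝ) + n0)) :=
  stmt_10_general n0 n hn a ha
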